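/- Let Σ̂ and Ω be symmetric p×p real matrices, let Ω̂ be any p×p real matrix, and let λ ≥ 0. Suppose ‖Σ̂ Ω − I_p‖_max ≤ λ, ‖Σ̂ Ω̂ − I_p‖_max ≤ λ, and ‖Ω̂‖_{L1} ≤ ‖Ω‖_{L1}. Then ‖Ω̂ − Ω‖_max ≤ 2λ ‖Ω‖_{L1}. -/
import Mathlib


open Matrix

/-- Entrywise maximum (max) norm of a real matrix. -/
noncomputable def maxNorm {m n : ℕ} (A : Matrix (Fin m) (Fin n) ℝ) : ℝ :=
  ⨆ i, ⨆ j, |A i j|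

/-- Maximum absolute column sum (matrix `L1`) norm of a real matrix. -/
noncomputable def l1Norm {m n : ℕ} (A : Matrix (Fin m) (Fin n) ℝ) : ℝ :=
  ⨆ j, ∑ i, |A i j|

lemma abs_le_maxNorm {m n : ℕ} (A : Matrix (Fin m) (Fin n) ℝ) (i : Fin m) (j : Fin n) :
    |A i j| ≤ maxNorm A := by
  have h1 : |A i j| ≤ ⨆ j, |A i j| :=
    le_ciSup (f := fun j => |A i j|) (Set.Finite.bddAbove (Set.finite_range _)) j
  exact h1.trans (le_ciSup (f := fun i => ⨆ j, |A i j|)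
    (Set.Finite.bddAbove (Set.finite_range _)) i)

lemma col_le_l1Norm {m n : ℕ} (A : Matrix (Fin m) (Fin n) ℝ) (j : Fin n) :
    ∑ i, |A i j| ≤ l1Norm A :=
  le_ciSup (f := fun j => ∑ i, |A i j|) (Set.Finite.bddAbove (Set.finite_range _)) j

/-- CLIME estimation error bound: if `Σ̂` and `Ω` are symmetric,
`‖Σ̂ Ω - I‖_max ≤ λ`, `‖Σ̂ Ω̂ - I‖_max ≤ λ` and `‖Ω̂‖_{L1} ≤ ‖Ω‖_{L1}`,
then `‖Ω̂ - Ω‖_max ≤ 2 λ ‖Ω‖_{L1}`. -/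
theorem stmt7 (p : ℕ) (lam : ℝ) (hlam : 0 ≤ lam)
    (Sig Om Omhat : Matrix (Fin p) (Fin p) ℝ)
    (hSig : Sig.IsSymm) (hOm : Om.IsSymm)
    (h1 : maxNorm (Sig * Om - 1) ≤ lam)
    (h2 : maxNorm (Sig * Omhat - 1) ≤ lam)
    (h3 : l1Norm Omhat ≤ l1Norm Om) :
    maxNorm (Omhat - Om) ≤ 2 * lam * l1Norm Om := by
  rcases Nat.eq_zero_or_pos p with hp | hp
  · subst hp
    have e1 : maxNorm (Omhat - Om) = 0 := Real.iSup_of_isEmpty _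
    have e2 : l1Norm Om = 0 := Real.iSup_of_isEmpty _
    rw [e1, e2]; ring_nf; rfl
  · haveI : NeZero p := ⟨hp.ne'⟩
    have hOS : Om * Sig = (Sig * Om)ᵀ := by
      rw [Matrix.transpose_mul, hOm.eq, hSig.eq]
    have key : ∀ i j : Fin p, |(Omhat - Om) i j| ≤ 2 * lam * l1Norm Om := by
      intro i j
      have hid : Omhat - Om = (1 - Om * Sig) * Omhat + Om * (Sig * Omhat - 1) := by
        noncomm_ring
      have hentry : (Omhat - Om) i j =
          (∑ k, (1 - Om * Sig) i k * Omhat k j) + ∑ k, Om i k * (Sig * Omhat - 1) k j := by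
        rw [hid]; simp [Matrix.add_apply, Matrix.mul_apply]
      have hA : ∀ k, |(1 - Om * Sig) i k| ≤ lam := by
        intro k
        have : (1 - Om * Sig) i k = -((Sig * Om - 1) k i) := by
          rw [hOS]
          simp only [Matrix.sub_apply, Matrix.transpose_apply, Matrix.one_apply, neg_sub]
          by_cases h : i = k <;> simp [h, eq_comm]
        rw [this, abs_neg]
        exact (abs_le_maxNorm _ k i).trans h1
      have hB : ∀ k, |(Sig * Omhat - 1) k j| ≤ lam := fun k =>
        (abs_le_maxNorm _ k j).trans h2
      have b1 : |∑ k, (1 - Om * Sig) i k * Omhat k j| ≤ lam * l1Norm Om := by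
        calc |∑ k, (1 - Om * Sig) i k * Omhat k j|
            ≤ ∑ k, |(1 - Om * Sig) i k * Omhat k j| := Finset.abs_sum_le_sum_abs _ _
          _ ≤ ∑ k, lam * |Omhat k j| := by
              refine Finset.sum_le_sum fun k _ => ?_
              rw [abs_mul]
              exact mul_le_mul_of_nonneg_right (hA k) (abs_nonneg _)
          _ = lam * ∑ k, |Omhat k j| := by rw [Finset.mul_sum]
          _ ≤ lam * l1Norm Om :=
              mul_le_mul_of_nonneg_left ((col_le_l1Norm Omhat j).trans h3) hlam
      have b2 : |∑ k, Om i k * (Sig * Omhat - 1) k j| ≤ lam * l1Norm Om := by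
        calc |∑ k, Om i k * (Sig * Omhat - 1) k j|
            ≤ ∑ k, |Om i k * (Sig * Omhat - 1) k j| := Finset.abs_sum_le_sum_abs _ _
          _ ≤ ∑ k, |Om i k| * lam := by
              refine Finset.sum_le_sum fun k _ => ?_
              rw [abs_mul]
              exact mul_le_mul_of_nonneg_left (hB k) (abs_nonneg _)
          _ = (∑ k, |Om i k|) * lam := by rw [Finset.sum_mul]
          _ ≤ l1Norm Om * lam := by
              refine mul_le_mul_of_nonneg_right ?_ hlam
              have : ∀ k, |Om i k| = |Om k i| := fun k => by
                conv_lhs => rw [← hOm.eq]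
                rfl
              calc ∑ k, |Om i k| = ∑ k, |Om k i| := by simp_rw [this]
                _ ≤ l1Norm Om := col_le_l1Norm Om i
          _ = lam * l1Norm Om := mul_comm _ _
      calc |(Omhat - Om) i j| ≤ |∑ k, (1 - Om * Sig) i k * Omhat k j| +
            |∑ k, Om i k * (Sig * Omhat - 1) k j| := by rw [hentry]; exact abs_add_le _ _
        _ ≤ lam * l1Norm Om + lam * l1Norm Om := add_le_add b1 b2
        _ = 2 * lam * l1Norm Om := by ring
    exact ciSup_le fun i => ciSup_le fun j => key i j
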